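/- The function f = (1/√2) φ_0 + φ_2 is nonzero, satisfies f(0) = 0, and its Fourier transform f̂ = (1/√2) φ_0 − φ_2 satisfies f̂(1) = 0 and f̂(−1) = 0. Hence (Λ, M) with Λ = {0}, M = {−1, 1} is not a uniqueness pair for span{φ_0, φ_1, φ_2}. -/

import Mathlib

open MeasureTheory

/-- Unitary Fourier transform. -/
noncomputable def fourierT (f : ℝ → ℂ) (ω : ℝ) : ℂ :=
  ((Real.sqrt (2 * Real.pi) : ℝ) : ℂ)⁻¹ *
    ∫ t : ℝ, f t * Complex.exp (-Complex.I * ω * t)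

/-- `φ_0(x) = π^{-1/4} e^{-x²/2}`. -/
noncomputable def phi0 (x : ℝ) : ℝ :=
  Real.pi ^ (-(1 : ℝ)/4) * Real.exp (-x ^ 2 / 2)

/-- `φ_1(x) = π^{-1/4} √2 x e^{-x²/2}`. -/
noncomputable def phi1 (x : ℝ) : ℝ :=
  Real.pi ^ (-(1 : ℝ)/4) * Real.sqrt 2 * x * Real.exp (-x ^ 2 / 2)

/-- `φ_2(x) = π^{-1/4} 2^{-1/2} (2x² − 1) e^{-x²/2}`. -/
noncomputable def phi2 (x : ℝ) : ℝ :=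
  Real.pi ^ (-(1 : ℝ)/4) * (Real.sqrt 2)⁻¹ * (2 * x ^ 2 - 1) * Real.exp (-x ^ 2 / 2)

/-!
With `g t = exp (-t² / 2)`, the function `f = φ₀ / √2 + φ₂` is `√2 π^{-1/4} t² g`. Since
`ĝ = g`, `t² g = g + g''` and differentiation becomes multiplication by `iω` under the Fourier
transform, `(t² g)^ = (1 - ω²) g`, so `f̂ = √2 π^{-1/4} (1 - ω²) g = φ₀ / √2 - φ₂`. Thus `f`
vanishes at `0` (but not at `1`) and `f̂` vanishes at `±1`.
-/

open Real Complex FourierTransform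

noncomputable def gaussian (x : ℝ) : ℂ := (Real.exp (-x ^ 2 / 2) : ℝ)

lemma gaussian_ne_zero (x : ℝ) : gaussian x ≠ 0 :=
  ofReal_ne_zero.mpr (Real.exp_pos _).ne'

lemma fourierT_eq_fourier (f : ℝ → ℂ) (ω : ℝ) :
    fourierT f ω = ((√(2 * π) : ℝ) : ℂ)⁻¹ * 𝓕 f (ω / (2 * π)) := by
  rw [fourierT, Real.fourier_real_eq_integral_exp_smul]
  congr 1
  refine integral_congr_ae (.of_forall fun t => ?_)
  dsimp only
  rw [smul_eq_mul, mul_comm]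
  congr 2
  push_cast
  field_simp

lemma fourierT_add {f g : ℝ → ℂ} (hf : Integrable f) (hg : Integrable g) (ω : ℝ) :
    fourierT (f + g) ω = fourierT f ω + fourierT g ω := by
  simp only [fourierT_eq_fourier, Real.fourier_eq, Pi.add_apply, smul_add]
  rw [integral_add ((Real.fourierIntegral_convergent_iff _).2 hf)
    ((Real.fourierIntegral_convergent_iff _).2 hg), mul_add]

lemma fourierT_const_mul (c : ℂ) (f : ℝ → ℂ) (ω : ℝ) :
    fourierT (fun t => c * f t) ω = c * fourierT f ω := by
  simp only [fourierT, mul_assoc, integral_const_mul]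
  ring

lemma fourierT_deriv {f : ℝ → ℂ} (hf : Integrable f) (hd : Differentiable ℝ f)
    (hf' : Integrable (deriv f)) (ω : ℝ) :
    fourierT (deriv f) ω = I * ω * fourierT f ω := by
  rw [fourierT_eq_fourier, fourierT_eq_fourier, Real.fourier_deriv hf hd hf']
  simp only [smul_eq_mul]
  push_cast
  field_simp

lemma hasDerivAt_gaussian (x : ℝ) : HasDerivAt gaussian (-x * gaussian x) x := by
  refine ((hasDerivAt_pow 2 x).neg.div_const 2).exp.ofReal_comp.congr_deriv ?_
  simp only [gaussian, Pi.neg_apply]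
  push_cast
  ring

lemma deriv_gaussian : deriv gaussian = fun x => -x * gaussian x :=
  funext fun x => (hasDerivAt_gaussian x).deriv

lemma deriv_deriv_gaussian : deriv (deriv gaussian) = fun x => (x ^ 2 - 1) * gaussian x := by
  rw [deriv_gaussian]
  funext x
  have h : HasDerivAt (fun y : ℝ => -(y : ℂ) * gaussian y) ((x ^ 2 - 1) * gaussian x) x := by
    refine (ofRealCLM.hasDerivAt.neg.mul (hasDerivAt_gaussian x)).congr_deriv ?_
    simp only [Pi.neg_apply, ofRealCLM_apply, ofReal_one]
    ring
  exact h.deriv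

lemma integrable_pow_mul_gaussian (n : ℕ) : Integrable fun x : ℝ => (x : ℂ) ^ n * gaussian x := by
  have h := integrable_rpow_mul_exp_neg_mul_sq (b := 1 / 2) (by norm_num) (s := n)
    (neg_one_lt_zero.trans_le n.cast_nonneg)
  refine (h.ofReal (𝕜 := ℂ)).congr (.of_forall fun x => ?_)
  dsimp only
  rw [Real.rpow_natCast, gaussian, show -(1 / 2) * x ^ 2 = -x ^ 2 / 2 by ring]
  norm_cast

lemma fourierT_gaussian (ω : ℝ) : fourierT gaussian ω = gaussian ω := by
  have hsqrt : (π / (1 / 2) : ℂ) ^ (1 / 2 : ℂ) = ((√(2 * π) : ℝ) : ℂ) := by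
    rw [Real.sqrt_eq_rpow, Complex.ofReal_cpow (by positivity)]
    push_cast
    ring_nf
  have key : ∫ t : ℝ, gaussian t * cexp (-I * ω * t) = ((√(2 * π) : ℝ) : ℂ) * gaussian ω := by
    convert fourierIntegral_gaussian (b := 1 / 2) (by norm_num) (-ω) using 1
    · refine integral_congr_ae (.of_forall fun t => ?_)
      simp only [gaussian]
      push_cast
      ring_nf
    · rw [hsqrt, gaussian]
      push_cast
      ring_nf
  have hne : ((√(2 * π) : ℝ) : ℂ) ≠ 0 := by exact_mod_cast (by positivity : √(2 * π) ≠ 0)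
  rw [fourierT, key, ← mul_assoc, inv_mul_cancel₀ hne, one_mul]

lemma fourierT_sq_mul_gaussian (ω : ℝ) :
    fourierT (fun t => (t : ℂ) ^ 2 * gaussian t) ω = (1 - (ω : ℂ) ^ 2) * gaussian ω := by
  have hsplit : (fun t : ℝ => (t : ℂ) ^ 2 * gaussian t) = gaussian + deriv (deriv gaussian) := by
    rw [deriv_deriv_gaussian]
    funext t
    simp only [Pi.add_apply]
    ring
  have hint₀ : Integrable gaussian := by simpa using integrable_pow_mul_gaussian 0
  have hint₁ : Integrable (deriv gaussian) := by
    rw [deriv_gaussian]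
    simpa using (integrable_pow_mul_gaussian 1).neg
  have hint₂ : Integrable (deriv (deriv gaussian)) := by
    rw [deriv_deriv_gaussian]
    refine ((integrable_pow_mul_gaussian 2).sub hint₀).congr (.of_forall fun x => ?_)
    simp only [Pi.sub_apply]
    ring
  have hdiff₀ : Differentiable ℝ gaussian := fun x => (hasDerivAt_gaussian x).differentiableAt
  have hdiff₁ : Differentiable ℝ (deriv gaussian) := by
    rw [deriv_gaussian]
    exact ofRealCLM.differentiable.neg.mul hdiff₀
  rw [hsplit, fourierT_add hint₀ hint₂, fourierT_deriv hint₁ hdiff₁ hint₂,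
    fourierT_deriv hint₀ hdiff₀ hint₁, fourierT_gaussian]
  linear_combination ((ω : ℂ) ^ 2 * gaussian ω) * I_sq

lemma ofReal_inv_sqrt_two : ((√2 : ℝ) : ℂ)⁻¹ = (√2 : ℝ) / 2 := by
  rw [← ofReal_inv, ← one_div, ← Real.sqrt_div_self']
  norm_cast

lemma sqrt_two_inv_mul_phi0_add_phi2_eq (t : ℝ) :
    ((Real.sqrt 2)⁻¹ * phi0 t + phi2 t : ℂ) =
      ((√2 * π ^ (-(1 : ℝ) / 4) : ℝ) : ℂ) * ((t : ℂ) ^ 2 * gaussian t) := by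
  simp only [phi0, phi2, gaussian]
  push_cast
  rw [ofReal_inv_sqrt_two]
  ring

lemma sqrt_two_inv_mul_phi0_sub_phi2_eq (t : ℝ) :
    ((Real.sqrt 2)⁻¹ * phi0 t - phi2 t : ℂ) =
      ((√2 * π ^ (-(1 : ℝ) / 4) : ℝ) : ℂ) * ((1 - (t : ℂ) ^ 2) * gaussian t) := by
  simp only [phi0, phi2, gaussian]
  push_cast
  rw [ofReal_inv_sqrt_two]
  ring

lemma fourierT_sqrt_two_inv_mul_phi0_add_phi2 (ω : ℝ) :
    fourierT (fun t => ((Real.sqrt 2)⁻¹ * phi0 t + phi2 t : ℂ)) ω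
      = ((Real.sqrt 2)⁻¹ * phi0 ω - phi2 ω : ℂ) := by
  simp only [sqrt_two_inv_mul_phi0_add_phi2_eq, sqrt_two_inv_mul_phi0_sub_phi2_eq,
    fourierT_const_mul, fourierT_sq_mul_gaussian]

lemma sqrt_two_inv_mul_phi0_add_phi2_ne_zero :
    (fun t : ℝ => ((Real.sqrt 2)⁻¹ * phi0 t + phi2 t : ℂ)) ≠ 0 := by
  intro h
  have h1 := congrFun h 1
  rw [sqrt_two_inv_mul_phi0_add_phi2_eq] at h1
  exact mul_ne_zero (ofReal_ne_zero.mpr (by positivity)) (by simpa using gaussian_ne_zero 1) h1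

lemma sqrt_two_inv_mul_phi0_add_phi2_mem_span :
    (fun t : ℝ => ((Real.sqrt 2)⁻¹ * phi0 t + phi2 t : ℂ)) ∈ Submodule.span ℂ
      ({fun t => (phi0 t : ℂ), fun t => (phi1 t : ℂ), fun t => (phi2 t : ℂ)} : Set (ℝ → ℂ)) := by
  have hlin : (fun t : ℝ => ((Real.sqrt 2)⁻¹ * phi0 t + phi2 t : ℂ))
      = (((Real.sqrt 2)⁻¹ : ℝ) : ℂ) • (fun t : ℝ => (phi0 t : ℂ)) + fun t : ℝ => (phi2 t : ℂ) :=
    rfl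
  rw [hlin]
  exact Submodule.add_mem _ (Submodule.smul_mem _ _ (Submodule.subset_span (by simp)))
    (Submodule.subset_span (by simp))

/-- `f = (1/√2) φ_0 + φ_2` is nonzero, `f(0) = 0`, its Fourier transform is
`f̂ = (1/√2) φ_0 − φ_2` which vanishes at `±1`; hence `(Λ, M) = ({0}, {−1, 1})`
is not a uniqueness pair for `span{φ_0, φ_1, φ_2}`. -/
theorem stmt_4 :
    (fun t : ℝ => ((Real.sqrt 2)⁻¹ * phi0 t + phi2 t : ℂ)) ≠ 0 ∧
    ((Real.sqrt 2)⁻¹ * phi0 0 + phi2 0 : ℂ) = 0 ∧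
    (∀ ω : ℝ, fourierT (fun t => ((Real.sqrt 2)⁻¹ * phi0 t + phi2 t : ℂ)) ω
        = ((Real.sqrt 2)⁻¹ * phi0 ω - phi2 ω : ℂ)) ∧
    ((Real.sqrt 2)⁻¹ * phi0 1 - phi2 1 : ℂ) = 0 ∧
    ((Real.sqrt 2)⁻¹ * phi0 (-1) - phi2 (-1) : ℂ) = 0 ∧
    ¬ (∀ g : ℝ → ℂ,
        g ∈ Submodule.span ℂ
          ({fun t => (phi0 t : ℂ), fun t => (phi1 t : ℂ), fun t => (phi2 t : ℂ)} :
            Set (ℝ → ℂ)) →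
        (∀ t ∈ ({0} : Set ℝ), g t = 0) →
        (∀ ω ∈ ({-1, 1} : Set ℝ), fourierT g ω = 0) → g = 0) := by
  have hf_zero : ((Real.sqrt 2)⁻¹ * phi0 0 + phi2 0 : ℂ) = 0 := by
    rw [sqrt_two_inv_mul_phi0_add_phi2_eq]
    simp
  have hf_hat_one : ((Real.sqrt 2)⁻¹ * phi0 1 - phi2 1 : ℂ) = 0 := by
    rw [sqrt_two_inv_mul_phi0_sub_phi2_eq]
    simp
  have hf_hat_neg_one : ((Real.sqrt 2)⁻¹ * phi0 (-1) - phi2 (-1) : ℂ) = 0 := by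
    rw [sqrt_two_inv_mul_phi0_sub_phi2_eq]
    simp
  refine ⟨sqrt_two_inv_mul_phi0_add_phi2_ne_zero, hf_zero,
    fourierT_sqrt_two_inv_mul_phi0_add_phi2, hf_hat_one, hf_hat_neg_one, fun huniq =>
    sqrt_two_inv_mul_phi0_add_phi2_ne_zero (huniq _ sqrt_two_inv_mul_phi0_add_phi2_mem_span ?_ ?_)⟩
  · simpa using hf_zero
  · rintro ω (rfl | rfl)
    · rw [fourierT_sqrt_two_inv_mul_phi0_add_phi2, hf_hat_neg_one]
    · rw [fourierT_sqrt_two_inv_mul_phi0_add_phi2, hf_hat_one]
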